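/- arXiv:1705.06173 — 3 statements merged into one kernel-verified Lean document; each statement's English description precedes it below -/
import Mathlib

section
/- For every real ϑ with 1 < ϑ < (2 + √32)/7 and every real C ≥ 0, there exist a real ε > 0 and reals X, Y with 0 < X ≤ Y such that (2/ϑ − 1 − ε)·X > (ϑ − 1)·Y + C and (2 + 2ϑ − 3ϑ²)·Y ≥ (2 + 3ϑ·(1 + εϑ))·X + C. -/
/-!
For `ε = 0` the two inequalities ask for a ratio `Y / X` strictly between
`(2 + 3ϑ) / (2 + 2ϑ - 3ϑ²)` and `(2 - ϑ) / (ϑ (ϑ - 1))`; the gap between these bounds has the sign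
of `4 + 4ϑ - 7ϑ²`, whose positive root is `(2 + √32) / 7`. Inside this range both inequalities
hold strictly without the constant `C` for some small `ε > 0`, and scaling `X` and `Y` up absorbs `C`.
-/

open Real

lemma four_add_four_mul_sub_seven_mul_sq_pos {ϑ : ℝ} (h0 : 0 ≤ ϑ) (h2 : ϑ < (2 + √32) / 7) :
    0 < 4 + 4 * ϑ - 7 * ϑ ^ 2 := by
  have h_two_lt : 2 < √32 := (lt_sqrt zero_le_two).2 (by norm_num)
  have hsq : (7 * ϑ - 2) ^ 2 < 32 := sq_lt.2 ⟨by linarith, by linarith⟩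
  nlinarith

lemma exists_pos_mul_gt_and_mul_gt (C : ℝ) {p q : ℝ} (hp : 0 < p) (hq : 0 < q) :
    ∃ t : ℝ, 0 < t ∧ C < t * p ∧ C < t * q := by
  have hm : 0 < min p q := lt_min hp hq
  set t := (|C| + 1) / min p q
  have ht : 0 < t := by positivity
  have ht_min : t * min p q = |C| + 1 := div_mul_cancel₀ _ hm.ne'
  have hC : C < t * min p q := by linarith [le_abs_self C]
  exact ⟨t, ht, hC.trans_le (by gcongr; exact min_le_left p q),
    hC.trans_le (by gcongr; exact min_le_right p q)⟩

lemma exists_timeout_ratio {ϑ : ℝ} (h1 : 1 < ϑ) (hD : 0 < 4 + 4 * ϑ - 7 * ϑ ^ 2) :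
    ∃ ε X Y : ℝ, 0 < ε ∧ 0 < X ∧ X ≤ Y ∧
      0 < (2 / ϑ - 1 - ε) * X - (ϑ - 1) * Y ∧
      0 < (2 + 2 * ϑ - 3 * ϑ ^ 2) * Y - (2 + 3 * ϑ * (1 + ε * ϑ)) * X := by
  set A := 2 + 2 * ϑ - 3 * ϑ ^ 2
  set D := 4 + 4 * ϑ - 7 * ϑ ^ 2
  have hϑ : 0 < ϑ := by linarith
  have hA : 0 < A := by nlinarith
  set K := ϑ * A + 6 * (ϑ - 1) * ϑ ^ 3
  have hK : 0 < K := by positivity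
  set ε := D / (2 * K)
  have hεK : ε * K = D / 2 := by rw [div_mul_eq_mul_div, mul_div_mul_right D 2 hK.ne']
  -- `X = ϑ A` and `Y = ϑ (2 + 3ϑ + 6εϑ²)` leave the slacks `D - εK` and `3εϑ³A`.
  refine ⟨ε, ϑ * A, ϑ * (2 + 3 * ϑ + 6 * ε * ϑ ^ 2), by positivity, by positivity, ?_, ?_, ?_⟩
  · have hε : 0 ≤ ε * ϑ ^ 2 := by positivity
    exact mul_le_mul_of_nonneg_left (by linarith [sq_nonneg ϑ]) hϑ.le
  · have hslack : (2 / ϑ - 1 - ε) * (ϑ * A) - (ϑ - 1) * (ϑ * (2 + 3 * ϑ + 6 * ε * ϑ ^ 2))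
        = D - ε * K := by
      field_simp
      ring
    rw [hslack, hεK]
    linarith
  · have hslack : A * (ϑ * (2 + 3 * ϑ + 6 * ε * ϑ ^ 2)) - (2 + 3 * ϑ * (1 + ε * ϑ)) * (ϑ * A)
        = 3 * ε * ϑ ^ 3 * A := by
      ring
    rw [hslack]
    positivity

theorem timeout_inequalities_solvable_general (ϑ : ℝ) (h1 : 1 < ϑ)
    (h2 : ϑ < (2 + Real.sqrt 32) / 7) (C : ℝ) :
    ∃ ε X Y : ℝ, 0 < ε ∧ 0 < X ∧ X ≤ Y ∧
      (2 / ϑ - 1 - ε) * X > (ϑ - 1) * Y + C ∧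
      (2 + 2 * ϑ - 3 * ϑ ^ 2) * Y ≥ (2 + 3 * ϑ * (1 + ε * ϑ)) * X + C := by
  have hD := four_add_four_mul_sub_seven_mul_sq_pos (by linarith) h2
  obtain ⟨ε, X, Y, hε, hX, hXY, hfirst, hsecond⟩ := exists_timeout_ratio h1 hD
  obtain ⟨t, ht, hCfirst, hCsecond⟩ := exists_pos_mul_gt_and_mul_gt C hfirst hsecond
  refine ⟨ε, t * X, t * Y, hε, mul_pos ht hX, mul_le_mul_of_nonneg_left hXY ht.le, ?_, ?_⟩
  · linear_combination hCfirst
  · linear_combination hCsecond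

/-- Solvability of the two linear inequalities in `X` (for `T₂`) and `Y`
(for `T_active`) from the proof of Lemma 4.12, for drift `ϑ < (2+√32)/7`. -/
theorem timeout_inequalities_solvable (ϑ : ℝ) (h1 : 1 < ϑ)
    (h2 : ϑ < (2 + Real.sqrt 32) / 7) (C : ℝ) (hC : 0 ≤ C) :
    ∃ ε X Y : ℝ, 0 < ε ∧ 0 < X ∧ X ≤ Y ∧
      (2 / ϑ - 1 - ε) * X > (ϑ - 1) * Y + C ∧
      (2 + 2 * ϑ - 3 * ϑ ^ 2) * Y ≥ (2 + 3 * ϑ * (1 + ε * ϑ)) * X + C :=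
  timeout_inequalities_solvable_general ϑ h1 h2 C
end

section
/- Let σ ≥ 0 and d > 0 be reals, and let ϑ, φ be reals with 1 < ϑ < φ and ϑ²·φ < 31/30. Define ρ = T_vote = ϑ(σ + 2d), T_idle = ϑ(σ + d), T_att = ϑ(T_vote + 2d), r = 31/25, C₀ = 4, C₁ = 5. Then there exists X₀ > 0 such that for every real X > X₀, defining Φ₀⁻ = X, Φ₀⁺ = φX, Φ₁⁻ = rX, Φ₁⁺ = rφX, Ψ = (2/25)ϑφX, β = (6/25)ϑφX, T_cool = 16ϑβ, and for each h ∈ {0,1}: T_min,h = Φ_h⁻ − ρ, T_max,h = ϑ(Φ_h⁺ + T_vote), Λ_h⁻ = T_min,h/ϑ, Λ_h⁺ = T_max,h + T_vote, all of the following hold for each h ∈ {0,1}: (i) Φ_h⁻ > Ψ + 2ρ; (ii) Φ_h⁻ ≥ T_vote + T_idle + T_att + σ + 2d; (iii) T_min,h < T_cool; (iv) T_min,h/ϑ > Ψ + ρ; (v) T_cool/ϑ > 15β; (vi) β > 2Ψ + 4(T_vote + d) + ρ; (vii) for every integer j with 0 ≤ j ≤ 3: β·C_h·j ≤ j·Λ_h⁻,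 j·Λ_h⁻ < j·Λ_h⁺ + ρ, and j·Λ_h⁺ + ρ ≤ β·(C_h·j + 1). -/
set_option maxHeartbeats 2000000 in
/-- Lemma 5.12 of the paper: satisfiability of the resynchronisation
constraint system (Table 3) for sufficiently large `X`. -/
theorem resync_constraints_satisfiable (σ d ϑ φ : ℝ)
    (hσ : 0 ≤ σ) (hd : 0 < d) (hϑ : 1 < ϑ) (hϑφ : ϑ < φ)
    (hbound : ϑ ^ 2 * φ < 31 / 30) :
    ∃ X₀ : ℝ, 0 < X₀ ∧ ∀ X : ℝ, X > X₀ →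
      let ρ := ϑ * (σ + 2 * d)
      let Tvote := ϑ * (σ + 2 * d)
      let Tidle := ϑ * (σ + d)
      let Tatt := ϑ * (Tvote + 2 * d)
      let r : ℝ := 31 / 25
      let Φm : Fin 2 → ℝ := fun h => if h = 0 then X else r * X
      let Φp : Fin 2 → ℝ := fun h => if h = 0 then φ * X else r * φ * X
      let Ψ := (2 / 25) * ϑ * φ * X
      let β := (6 / 25) * ϑ * φ * X
      let Tcool := 16 * ϑ * β
      let Tmin : Fin 2 → ℝ := fun h => Φm h - ρ
      let Tmax : Fin 2 → ℝ := fun h => ϑ * (Φp h + Tvote)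
      let Λm : Fin 2 → ℝ := fun h => Tmin h / ϑ
      let Λp : Fin 2 → ℝ := fun h => Tmax h + Tvote
      let Cmul : Fin 2 → ℝ := fun h => if h = 0 then 4 else 5
      ∀ h : Fin 2,
        (Φm h > Ψ + 2 * ρ) ∧
        (Φm h ≥ Tvote + Tidle + Tatt + σ + 2 * d) ∧
        (Tmin h < Tcool) ∧
        (Tmin h / ϑ > Ψ + ρ) ∧
        (Tcool / ϑ > 15 * β) ∧
        (β > 2 * Ψ + 4 * (Tvote + d) + ρ) ∧
        (∀ j : ℕ, j ≤ 3 →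
          β * (Cmul h * (j : ℝ)) ≤ (j : ℝ) * Λm h ∧
          (j : ℝ) * Λm h < (j : ℝ) * Λp h + ρ ∧
          (j : ℝ) * Λp h + ρ ≤ β * (Cmul h * (j : ℝ) + 1)) := by
  have hϑ0 : (0:ℝ) < ϑ := by linarith
  have hφ1 : 1 < φ := lt_trans hϑ hϑφ
  have hϑ2 : ϑ ^ 2 < 31 / 30 := by nlinarith
  have hϑ51 : ϑ < 51 / 50 := by nlinarith
  have hφb : φ < 31 / 30 := by nlinarith
  have hϑφ1 : 1 < ϑ * φ := by nlinarith
  have hϑφb : ϑ * φ < 31 / 30 := by nlinarith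
  have hϑ2φ1 : 1 < ϑ ^ 2 * φ := by nlinarith
  have hS : (0:ℝ) < σ + 2 * d := by linarith
  have he : (0:ℝ) < 31 / 30 - ϑ ^ 2 * φ := by linarith
  refine ⟨1000 * (σ + 2 * d) / (31 / 30 - ϑ ^ 2 * φ), by positivity, ?_⟩
  intro X hX
  have hX0 : (0:ℝ) < X := lt_trans (by positivity) hX
  have hXe : 1000 * (σ + 2 * d) < (31 / 30 - ϑ ^ 2 * φ) * X := by
    rw [gt_iff_lt, div_lt_iff₀ he] at hX; linarith
  have hX3 : 30000 * (σ + 2 * d) < X := by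
    nlinarith [mul_pos (show (0:ℝ) < ϑ ^ 2 * φ - 1 by linarith) hX0]
  -- useful products
  have hm1 : ϑ * φ * X < 31 / 30 * X := mul_lt_mul_of_pos_right hϑφb hX0
  have hm1' : X < ϑ * φ * X := by nlinarith [mul_lt_mul_of_pos_right hϑφ1 hX0]
  have hm2 : ϑ ^ 2 * φ * X < 31 / 30 * X := mul_lt_mul_of_pos_right hbound hX0
  have hm2' : X < ϑ ^ 2 * φ * X := by nlinarith [mul_lt_mul_of_pos_right hϑ2φ1 hX0]
  have hρ : ϑ * (σ + 2 * d) < 51 / 50 * (σ + 2 * d) := mul_lt_mul_of_pos_right hϑ51 hS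
  have hρ0 : 0 < ϑ * (σ + 2 * d) := by positivity
  have hφ0 : (0:ℝ) < φ := by linarith
  have hρ2 : ϑ ^ 2 * (σ + 2 * d) < 31 / 30 * (σ + 2 * d) :=
    mul_lt_mul_of_pos_right hϑ2 hS
  have hϑd : ϑ * d < 51 / 50 * d := mul_lt_mul_of_pos_right hϑ51 hd
  have hϑd0 : 0 < ϑ * d := mul_pos hϑ0 hd
  have hP : (0:ℝ) < ϑ ^ 2 * φ * X := by positivity
  have hP2 : (0:ℝ) < ϑ ^ 2 * (σ + 2 * d) := by positivity
  have hP3 : (0:ℝ) < ϑ ^ 3 * (σ + 2 * d) := by positivity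
  dsimp only
  intro h
  fin_cases h <;> norm_num <;>
    refine ⟨by linarith [hm1, hρ, hX3],
      by linarith [hρ, hρ2, hϑd, hϑd0, hX3, hd, hσ],
      by linarith [hm2', hρ0, hP],
      by rw [lt_div_iff₀ hϑ0]; linarith [hm2, hρ2, hρ, hX3],
      by rw [lt_div_iff₀ hϑ0]; linarith [hP],
      by linarith [hm1', hX3, hρ, hd, hϑd0],
      ?_⟩
  all_goals
    intro j hj
    interval_cases j <;> push_cast <;>
      refine ⟨by rw [← mul_div_assoc, le_div_iff₀ hϑ0]; linarith [hm2, hX3, hρ, hXe, hS],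
        by rw [← mul_div_assoc, div_lt_iff₀ hϑ0]; linarith [hm2', hP3, hP2, hρ0],
        by linarith [hm1', hX3, hρ, hρ2]⟩
end

section
/- Let d > 0, ρ ≥ 0 be reals and let ϑ be a real with 1 < ϑ < (2 + √32)/7. Then there exists a constant K > 0 (depending only on ϑ, d, ρ) such that for every real P > 0 there exist positive reals T₁, T_listen, T₂, τ, T_consensus, T_wait, T_active, each at most K·(P + 1), satisfying: T₁ = 3ϑd; T_listen = (ϑ − 1)T₁ + 3ϑd; T₂ > ϑ(T_listen + 3T₁ + 3d); (2/ϑ − 1)T₂ > 2T_listen + T_consensus + 5T₁ + 4d; τ = max{(1 − 1/ϑ)T₂ + T_listen + d + max{T_listen + d, 3T₁ + 2d}, (1 − 1/ϑ)T_active + ρ}; T_consensus = ϑ(τ + P); T_wait = T₂ + T_consensus; T_active ≥ 4T₂ + T_listen + ϑ(T_listen + T_wait − 5T₁ − 4d + ρ); and T_active ≥ 2T₂ + T_consensus + ϑ(2T_listen + T₁ + T_wait + 3d + 2T₂ + 2T_consensus). -/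
/-!
All timeouts are affine in the consensus timeout `C = ϑ (τ + P)`: take `T₂` so that
`(2/ϑ - 1) T₂` beats its lower bound by `d`, and `T_active` to be its second lower bound plus
`ϑρ`, which also dominates the first one. The defining equation of `τ` then reads
`τ = max (s₁ τ + a₁) (s₂ τ + a₂)` with slopes `s₁ = (ϑ - 1) ϑ / (2 - ϑ)` and
`s₂ = (ϑ - 1)(7ϑ + 2) / (2 - ϑ)`, and the drift bound `ϑ < (2 + √32)/7`, i.e. `7ϑ² < 4ϑ + 4`,
is exactly `s₂ < 1`. A maximum of two affine maps with slopes below `1` has the fixed point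
`max (a₁ / (1 - s₁)) (a₂ / (1 - s₂))`, which is affine in `P`, and then so is every timeout.
-/

section AffineFixedPoint

variable {s a x : ℝ}

theorem mul_add_le_self_iff (hs : s < 1) : s * x + a ≤ x ↔ a / (1 - s) ≤ x := by
  rw [div_le_iff₀ (by linarith)]
  constructor <;> intro h <;> linarith

theorem mul_div_one_sub_add (hs : s < 1) : s * (a / (1 - s)) + a = a / (1 - s) := by
  have : 1 - s ≠ 0 := by linarith
  field_simp
  ring

theorem isFixedPt_max_mul_add {s₁ s₂ a₁ a₂ : ℝ} (h₁ : s₁ < 1) (h₂ : s₂ < 1) :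
    Function.IsFixedPt (fun x => max (s₁ * x + a₁) (s₂ * x + a₂))
      (max (a₁ / (1 - s₁)) (a₂ / (1 - s₂))) := by
  refine le_antisymm (max_le ?_ ?_) ?_
  · exact (mul_add_le_self_iff h₁).2 (le_max_left _ _)
  · exact (mul_add_le_self_iff h₂).2 (le_max_right _ _)
  · rcases max_choice (a₁ / (1 - s₁)) (a₂ / (1 - s₂)) with h | h <;> rw [h]
    · exact le_max_of_le_left (mul_div_one_sub_add h₁).ge
    · exact le_max_of_le_right (mul_div_one_sub_add h₂).ge

theorem mul_add_div_one_sub_le {P c : ℝ} (hs₀ : 0 ≤ s) (hs : s < 1) (hc : 0 ≤ c) (hP : 0 ≤ P) :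
    (s * P + c) / (1 - s) ≤ (s + c) / (1 - s) * (P + 1) := by
  rw [div_mul_eq_mul_div]
  exact div_le_div_of_nonneg_right (by nlinarith) (by linarith)

end AffineFixedPoint

theorem seven_mul_sq_lt_of_lt {ϑ : ℝ} (hϑ : 0 ≤ ϑ) (h : ϑ < (2 + √32) / 7) :
    7 * ϑ ^ 2 < 4 * ϑ + 4 := by
  have hsqrt : 2 < √32 := (Real.lt_sqrt (by norm_num)).2 (by norm_num)
  have := Real.sq_lt.2 (⟨by linarith, by linarith⟩ : -√32 < 7 * ϑ - 2 ∧ 7 * ϑ - 2 < √32)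
  linarith

theorem lt_two_of_seven_mul_sq_lt {ϑ : ℝ} (h : 7 * ϑ ^ 2 < 4 * ϑ + 4) : ϑ < 2 := by
  nlinarith

namespace PulseSync

noncomputable section

variable (ϑ d ρ : ℝ)

def T₁ : ℝ := 3 * ϑ * d

def Tlisten : ℝ := (ϑ - 1) * T₁ ϑ d + 3 * ϑ * d

def T₂ (C : ℝ) : ℝ := ϑ / (2 - ϑ) * (2 * Tlisten ϑ d + C + 5 * T₁ ϑ d + 5 * d)

def Twait (C : ℝ) : ℝ := T₂ ϑ d C + C

def Tactive (C : ℝ) : ℝ :=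
  2 * T₂ ϑ d C + C +
    ϑ * (2 * Tlisten ϑ d + T₁ ϑ d + Twait ϑ d C + 3 * d + 2 * T₂ ϑ d C + 2 * C) + ϑ * ρ

def τ₁ (C : ℝ) : ℝ :=
  (1 - 1 / ϑ) * T₂ ϑ d C + Tlisten ϑ d + d + max (Tlisten ϑ d + d) (3 * T₁ ϑ d + 2 * d)

def τ₂ (C : ℝ) : ℝ := (1 - 1 / ϑ) * Tactive ϑ d ρ C + ρ

def activeSlope : ℝ := (2 + 3 * ϑ) * (ϑ / (2 - ϑ)) + 1 + 3 * ϑ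

def s₁ : ℝ := (ϑ - 1) * (ϑ / (2 - ϑ))

def s₂ : ℝ := (ϑ - 1) * activeSlope ϑ

/-- The fixed point of `isFixedPt_max_mul_add` with `aᵢ = sᵢ P + τᵢ 0`, since
`τᵢ (ϑ (τ + P)) = sᵢ (τ + P) + τᵢ 0`. -/
def τ (P : ℝ) : ℝ :=
  max ((s₁ ϑ * P + τ₁ ϑ d 0) / (1 - s₁ ϑ)) ((s₂ ϑ * P + τ₂ ϑ d ρ 0) / (1 - s₂ ϑ))

def Tconsensus (P : ℝ) : ℝ := ϑ * (τ ϑ d ρ P + P)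

variable {ϑ d ρ}

theorem T₂_eq_mul_add (C : ℝ) : T₂ ϑ d C = ϑ / (2 - ϑ) * C + T₂ ϑ d 0 := by
  simp only [T₂]; ring

theorem Tactive_eq_mul_add (C : ℝ) : Tactive ϑ d ρ C = activeSlope ϑ * C + Tactive ϑ d ρ 0 := by
  simp only [Tactive, Twait, T₂, activeSlope]; ring

theorem τ₁_mul (hϑ : ϑ ≠ 0) (x : ℝ) : τ₁ ϑ d (ϑ * x) = s₁ ϑ * x + τ₁ ϑ d 0 := by
  simp only [τ₁, s₁, T₂_eq_mul_add (ϑ * x)]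
  field_simp
  ring

theorem τ₂_mul (hϑ : ϑ ≠ 0) (x : ℝ) : τ₂ ϑ d ρ (ϑ * x) = s₂ ϑ * x + τ₂ ϑ d ρ 0 := by
  simp only [τ₂, s₂, Tactive_eq_mul_add (ϑ * x)]
  field_simp
  ring

theorem s₁_nonneg (hϑ : 1 ≤ ϑ) (hϑ₂ : ϑ < 2) : 0 ≤ s₁ ϑ :=
  mul_nonneg (by linarith) (div_nonneg (by linarith) (by linarith))

theorem activeSlope_nonneg (hϑ : 0 ≤ ϑ) (hϑ₂ : ϑ < 2) : 0 ≤ activeSlope ϑ := by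
  have : 0 ≤ ϑ / (2 - ϑ) := div_nonneg (by linarith) (by linarith)
  unfold activeSlope
  nlinarith

theorem s₂_nonneg (hϑ : 1 ≤ ϑ) (hϑ₂ : ϑ < 2) : 0 ≤ s₂ ϑ :=
  mul_nonneg (by linarith) (activeSlope_nonneg (by linarith) hϑ₂)

theorem s₁_lt_one (h : 7 * ϑ ^ 2 < 4 * ϑ + 4) : s₁ ϑ < 1 := by
  have hϑ₂ := lt_two_of_seven_mul_sq_lt h
  rw [s₁, mul_div_assoc', div_lt_one (by linarith)]
  nlinarith

theorem s₂_lt_one (h : 7 * ϑ ^ 2 < 4 * ϑ + 4) : s₂ ϑ < 1 := by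
  have hϑ₂ := lt_two_of_seven_mul_sq_lt h
  have hs₂ : s₂ ϑ = (ϑ - 1) * (7 * ϑ + 2) / (2 - ϑ) := by
    have : 2 - ϑ ≠ 0 := by linarith
    simp only [s₂, activeSlope]
    field_simp
    ring
  rw [hs₂, div_lt_one (by linarith)]
  nlinarith

theorem T₁_pos (hϑ : 0 < ϑ) (hd : 0 < d) : 0 < T₁ ϑ d := by
  unfold T₁; positivity

theorem Tlisten_pos (hϑ : 1 ≤ ϑ) (hd : 0 < d) : 0 < Tlisten ϑ d := by
  have := T₁_pos (by linarith : (0 : ℝ) < ϑ) hd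
  unfold Tlisten
  nlinarith

theorem T₂_pos (hϑ : 1 ≤ ϑ) (hϑ₂ : ϑ < 2) (hd : 0 < d) {C : ℝ} (hC : 0 ≤ C) :
    0 < T₂ ϑ d C := by
  have := T₁_pos (by linarith : (0 : ℝ) < ϑ) hd
  have := Tlisten_pos hϑ hd
  exact mul_pos (div_pos (by linarith) (by linarith)) (by linarith)

theorem lt_T₂ (hϑ : 1 ≤ ϑ) (hϑ₂ : ϑ < 2) (hd : 0 < d) {C : ℝ} (hC : 0 ≤ C) :
    ϑ * (Tlisten ϑ d + 3 * T₁ ϑ d + 3 * d) < T₂ ϑ d C := by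
  have := T₁_pos (by linarith : (0 : ℝ) < ϑ) hd
  have := Tlisten_pos hϑ hd
  have hX : 0 < ϑ * (Tlisten ϑ d + 3 * T₁ ϑ d + 3 * d) := mul_pos (by linarith) (by linarith)
  rw [T₂, div_mul_eq_mul_div, lt_div_iff₀ (by linarith)]
  nlinarith [mul_nonneg (sub_nonneg.2 hϑ) hX.le]

theorem two_div_sub_one_mul_T₂ (hϑ : ϑ ≠ 0) (hϑ₂ : ϑ ≠ 2) (C : ℝ) :
    (2 / ϑ - 1) * T₂ ϑ d C = 2 * Tlisten ϑ d + C + 5 * T₁ ϑ d + 5 * d := by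
  have : 2 - ϑ ≠ 0 := sub_ne_zero.2 (Ne.symm hϑ₂)
  rw [T₂]
  field_simp

theorem Tlisten_add_T₁_add_Twait_le_Tactive (hϑ : 1 ≤ ϑ) (hϑ₂ : ϑ < 2) (hd : 0 < d)
    (hρ : 0 ≤ ρ) {C : ℝ} (hC : 0 ≤ C) :
    Tlisten ϑ d + T₁ ϑ d + Twait ϑ d C ≤ Tactive ϑ d ρ C := by
  have := T₁_pos (by linarith : (0 : ℝ) < ϑ) hd
  have := Tlisten_pos hϑ hd
  have := T₂_pos hϑ hϑ₂ hd hC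
  unfold Tactive Twait at *
  nlinarith

theorem wait_bound_le_Tactive (hϑ : 1 ≤ ϑ) (hϑ₂ : ϑ < 2) (hd : 0 < d) {C : ℝ} (hC : 0 ≤ C) :
    4 * T₂ ϑ d C + Tlisten ϑ d +
        ϑ * (Tlisten ϑ d + Twait ϑ d C - 5 * T₁ ϑ d - 4 * d + ρ) ≤ Tactive ϑ d ρ C := by
  have := T₁_pos (by linarith : (0 : ℝ) < ϑ) hd
  have := Tlisten_pos hϑ hd
  have := T₂_pos hϑ hϑ₂ hd hC
  unfold Tactive Twait
  nlinarith

theorem consensus_bound_le_Tactive (hϑ : 0 ≤ ϑ) (hρ : 0 ≤ ρ) (C : ℝ) :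
    2 * T₂ ϑ d C + C +
        ϑ * (2 * Tlisten ϑ d + T₁ ϑ d + Twait ϑ d C + 3 * d + 2 * T₂ ϑ d C + 2 * C) ≤
      Tactive ϑ d ρ C :=
  le_add_of_nonneg_right (mul_nonneg hϑ hρ)

theorem τ₁_zero_pos (hϑ : 1 ≤ ϑ) (hϑ₂ : ϑ < 2) (hd : 0 < d) : 0 < τ₁ ϑ d 0 := by
  have h₀ : 0 ≤ 1 - 1 / ϑ := sub_nonneg.2 (div_le_one_of_le₀ hϑ (by linarith))
  have := T₂_pos hϑ hϑ₂ hd le_rfl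
  have := Tlisten_pos hϑ hd
  have := le_max_left (Tlisten ϑ d + d) (3 * T₁ ϑ d + 2 * d)
  unfold τ₁
  nlinarith

theorem Tactive_zero_pos (hϑ : 1 ≤ ϑ) (hϑ₂ : ϑ < 2) (hd : 0 < d) (hρ : 0 ≤ ρ) :
    0 < Tactive ϑ d ρ 0 := by
  have := Tlisten_add_T₁_add_Twait_le_Tactive hϑ hϑ₂ hd hρ le_rfl
  have := T₁_pos (by linarith : (0 : ℝ) < ϑ) hd
  have := Tlisten_pos hϑ hd
  have := T₂_pos hϑ hϑ₂ hd le_rfl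
  unfold Twait at *
  linarith

theorem τ₂_zero_nonneg (hϑ : 1 ≤ ϑ) (hϑ₂ : ϑ < 2) (hd : 0 < d) (hρ : 0 ≤ ρ) :
    0 ≤ τ₂ ϑ d ρ 0 := by
  have h₀ : 0 ≤ 1 - 1 / ϑ := sub_nonneg.2 (div_le_one_of_le₀ hϑ (by linarith))
  have := Tactive_zero_pos hϑ hϑ₂ hd hρ
  unfold τ₂
  positivity

theorem τ_pos (hϑ : 1 ≤ ϑ) (h : 7 * ϑ ^ 2 < 4 * ϑ + 4) (hd : 0 < d) {P : ℝ} (hP : 0 ≤ P) :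
    0 < τ ϑ d ρ P := by
  have hϑ₂ := lt_two_of_seven_mul_sq_lt h
  have := τ₁_zero_pos hϑ hϑ₂ hd
  have := s₁_nonneg hϑ hϑ₂
  exact lt_max_of_lt_left (div_pos (by positivity) (sub_pos.2 (s₁_lt_one h)))

theorem τ_eq (hϑ : ϑ ≠ 0) (h : 7 * ϑ ^ 2 < 4 * ϑ + 4) (P : ℝ) :
    τ ϑ d ρ P = max (τ₁ ϑ d (Tconsensus ϑ d ρ P)) (τ₂ ϑ d ρ (Tconsensus ϑ d ρ P)) := by
  rw [Tconsensus, τ₁_mul hϑ, τ₂_mul hϑ, mul_add, mul_add, add_assoc, add_assoc]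
  exact (isFixedPt_max_mul_add (s₁_lt_one h) (s₂_lt_one h)).symm

theorem exists_Tactive_Tconsensus_le (hϑ : 1 ≤ ϑ) (h : 7 * ϑ ^ 2 < 4 * ϑ + 4) (hd : 0 < d)
    (hρ : 0 ≤ ρ) : ∃ K > 0, ∀ P > 0, Tactive ϑ d ρ (Tconsensus ϑ d ρ P) ≤ K * (P + 1) := by
  have hϑ₂ := lt_two_of_seven_mul_sq_lt h
  have hs₁ := s₁_lt_one h
  have hs₂ := s₂_lt_one h
  have hc₁ := (τ₁_zero_pos hϑ hϑ₂ hd).le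
  have hc₂ := τ₂_zero_nonneg hϑ hϑ₂ hd hρ
  have hk₁ : 0 ≤ (s₁ ϑ + τ₁ ϑ d 0) / (1 - s₁ ϑ) :=
    div_nonneg (add_nonneg (s₁_nonneg hϑ hϑ₂) hc₁) (by linarith)
  have hk₂ : 0 ≤ (s₂ ϑ + τ₂ ϑ d ρ 0) / (1 - s₂ ϑ) :=
    div_nonneg (add_nonneg (s₂_nonneg hϑ hϑ₂) hc₂) (by linarith)
  set k := (s₁ ϑ + τ₁ ϑ d 0) / (1 - s₁ ϑ) + (s₂ ϑ + τ₂ ϑ d ρ 0) / (1 - s₂ ϑ)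
  have hτ : ∀ P > 0, τ ϑ d ρ P + P ≤ (k + 1) * (P + 1) := by
    intro P hP
    have hP₁ : 0 ≤ P + 1 := by linarith
    have : τ ϑ d ρ P ≤ k * (P + 1) := max_le
      ((mul_add_div_one_sub_le (s₁_nonneg hϑ hϑ₂) hs₁ hc₁ hP.le).trans
        (mul_le_mul_of_nonneg_right (le_add_of_nonneg_right hk₂) hP₁))
      ((mul_add_div_one_sub_le (s₂_nonneg hϑ hϑ₂) hs₂ hc₂ hP.le).trans
        (mul_le_mul_of_nonneg_right (le_add_of_nonneg_left hk₁) hP₁))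
    linarith
  have hw : 0 ≤ activeSlope ϑ * ϑ :=
    mul_nonneg (activeSlope_nonneg (by linarith) hϑ₂) (by linarith)
  have hA := Tactive_zero_pos hϑ hϑ₂ hd hρ
  refine ⟨activeSlope ϑ * ϑ * (k + 1) + Tactive ϑ d ρ 0, by positivity, fun P hP => ?_⟩
  rw [Tactive_eq_mul_add, Tconsensus, ← mul_assoc]
  nlinarith [mul_le_mul_of_nonneg_left (hτ P hP) hw]

end

end PulseSync

open PulseSync

/-- Lemma 4.12 of the paper: the timeout constraint system (Table 1) can be
satisfied with all timeouts in `O(P)`, for drift `ϑ < (2+√32)/7`. -/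
theorem pulse_constraints_satisfiable (d ρ ϑ : ℝ) (hd : 0 < d) (hρ : 0 ≤ ρ)
    (h1 : 1 < ϑ) (h2 : ϑ < (2 + Real.sqrt 32) / 7) :
    ∃ K : ℝ, 0 < K ∧ ∀ P : ℝ, 0 < P →
      ∃ T₁ Tlisten T₂ τ Tconsensus Twait Tactive : ℝ,
        0 < T₁ ∧ 0 < Tlisten ∧ 0 < T₂ ∧ 0 < τ ∧ 0 < Tconsensus ∧ 0 < Twait ∧ 0 < Tactive ∧
        T₁ ≤ K * (P + 1) ∧ Tlisten ≤ K * (P + 1) ∧ T₂ ≤ K * (P + 1) ∧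
        τ ≤ K * (P + 1) ∧ Tconsensus ≤ K * (P + 1) ∧ Twait ≤ K * (P + 1) ∧
        Tactive ≤ K * (P + 1) ∧
        T₁ = 3 * ϑ * d ∧
        Tlisten = (ϑ - 1) * T₁ + 3 * ϑ * d ∧
        T₂ > ϑ * (Tlisten + 3 * T₁ + 3 * d) ∧
        (2 / ϑ - 1) * T₂ > 2 * Tlisten + Tconsensus + 5 * T₁ + 4 * d ∧
        τ = max ((1 - 1 / ϑ) * T₂ + Tlisten + d + max (Tlisten + d) (3 * T₁ + 2 * d))
              ((1 - 1 / ϑ) * Tactive + ρ) ∧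
        Tconsensus = ϑ * (τ + P) ∧
        Twait = T₂ + Tconsensus ∧
        Tactive ≥ 4 * T₂ + Tlisten + ϑ * (Tlisten + Twait - 5 * T₁ - 4 * d + ρ) ∧
        Tactive ≥ 2 * T₂ + Tconsensus +
          ϑ * (2 * Tlisten + T₁ + Twait + 3 * d + 2 * T₂ + 2 * Tconsensus) := by
  have hϑ : 1 ≤ ϑ := h1.le
  have h7 := seven_mul_sq_lt_of_lt (by linarith) h2
  have hϑ₂ := lt_two_of_seven_mul_sq_lt h7
  obtain ⟨K, hK, hbound⟩ := exists_Tactive_Tconsensus_le hϑ h7 hd hρ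
  refine ⟨K, hK, fun P hP => ?_⟩
  have hτ := τ_pos (ρ := ρ) hϑ h7 hd hP.le
  have hKC := hbound P hP
  set C := Tconsensus ϑ d ρ P with hC_def
  have hτC : τ ϑ d ρ P ≤ C := by rw [hC_def, Tconsensus]; nlinarith
  have hC : 0 < C := by linarith
  have hT₁ := T₁_pos (by linarith : 0 < ϑ) hd
  have hTlisten := Tlisten_pos hϑ hd
  have hT₂ := T₂_pos hϑ hϑ₂ hd hC.le
  have hTactive := Tlisten_add_T₁_add_Twait_le_Tactive hϑ hϑ₂ hd hρ hC.le
  have hT₂' := two_div_sub_one_mul_T₂ (d := d) (by positivity) hϑ₂.ne C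
  refine ⟨T₁ ϑ d, Tlisten ϑ d, T₂ ϑ d C, τ ϑ d ρ P, C, Twait ϑ d C, Tactive ϑ d ρ C,
    hT₁, hTlisten, hT₂, hτ, hC, ?_, ?_, ?_, ?_, ?_, ?_, ?_, ?_, hKC, rfl, rfl,
    lt_T₂ hϑ hϑ₂ hd hC.le, ?_, τ_eq (by positivity) h7 P, rfl, rfl,
    wait_bound_le_Tactive hϑ hϑ₂ hd hC.le, consensus_bound_le_Tactive (by linarith) hρ C⟩
  all_goals unfold Twait at *; linarith
end
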